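/- arXiv:2106.10008 — 3 statements merged into one kernel-verified Lean document; each statement's English description precedes it below -/
import Mathlib

section
/- Assume additionally that W is nonzero and that, whenever c is even, m denotes the least odd positive integer with alpha_m(W) = 1 (which exists). Then at least one of the following holds: (1) c = a+b; (2) c = a+b+1 and c is odd; (3) c is even and c + m = a+b; (4) c is even, m >= 3 and c + m = a+b+1. (This is the contrapositive form of Theorem 1.1: for a prime p = 2h+1 >= 5 and a Mersenne prime M outside the exceptional set Sigma_p, the polynomial phi_p(M) = sigma(M^(p-1)) is divisible by an irreducible polynomial which is not a Mersenne prime.) -/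
open Polynomial

/-- `alpha l S` is the coefficient of `x^(deg S - l)` in `S`. -/
noncomputable def alpha (l : ℕ) (S : Polynomial (ZMod 2)) : ZMod 2 :=
  S.coeff (S.natDegree - l)

/-- `sigmaPow P n = 1 + P + ⋯ + P^n`, the sum of divisors of `P^n` for `P` irreducible. -/
noncomputable def sigmaPow (P : Polynomial (ZMod 2)) (n : ℕ) : Polynomial (ZMod 2) :=
  ∑ i ∈ Finset.range (n + 1), P ^ i

/-!
Put `y = x^a (x+1)^b`, so `M = 1 + y`, and `Q = σ(M^(h-1))`. In characteristic 2,
`σ(M^(2h)) = 1 + M (1 + M) Q² = 1 + y Q² + (y Q)²`, and `U` is a square because `u` and `v` are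
even; hence `W` is a square plus `F = y Q²`, and the coefficients of `W` of odd index are those of
`F`. Now `F` is monic of degree `D - (a+b)` with `D = 2h(a+b)`, and its next coefficient is `b`.
Since `M` is irreducible it is not a square, so `a` and `b` are not both even, and `F` has a
coefficient `1` of odd index `D - (a+b)` or `D - (a+b) - 1`. The leading coefficient of `W` (for
`c` odd), resp. its coefficient `alpha_m(W)` (for `c` even), sits at an odd index, so it lies in
this window, which pins `c`, resp. `c + m`, to `a + b` or `a + b + 1`.
-/

theorem coeff_sq_eq_zero_of_odd {R : Type*} [CommSemiring R] [ExpChar R 2] (p : R[X]) {k : ℕ}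
    (hk : Odd k) : (p ^ 2).coeff k = 0 := by
  rw [← map_frobenius_expand 2, coeff_map, coeff_expand two_pos,
    if_neg (Nat.not_even_iff_odd.mpr hk ∘ even_iff_two_dvd.mpr), map_zero]

section XPowMulXAddOnePow

variable {R : Type*} [CommSemiring R]

theorem isMonicOfDegree_X_pow_mul_X_add_one_pow [Nontrivial R] (a b : ℕ) :
    IsMonicOfDegree (X ^ a * (X + 1) ^ b : R[X]) (a + b) := by
  have hX1 : IsMonicOfDegree (X + 1 : R[X]) 1 := by simpa using isMonicOfDegree_X_add_one (1 : R)
  simpa using (isMonicOfDegree_X_pow R a).mul (hX1.pow b)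

theorem nextCoeff_X_pow_mul_X_add_one_pow (a b : ℕ) :
    (X ^ a * (X + 1) ^ b : R[X]).nextCoeff = b := by
  have hX : (X : R[X]).nextCoeff = 0 := by simpa using nextCoeff_X_add_C (0 : R)
  have hX1 : (X + 1 : R[X]).nextCoeff = 1 := by simpa using nextCoeff_X_add_C (1 : R)
  have hX1_monic : (X + 1 : R[X]).Monic := by simpa using monic_X_add_C (1 : R)
  rw [(monic_X_pow a).nextCoeff_mul (hX1_monic.pow b), monic_X.nextCoeff_pow,
    hX1_monic.nextCoeff_pow, hX, hX1]
  simp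

end XPowMulXAddOnePow

theorem isMonicOfDegree_one_add_X_pow_mul_X_add_one_pow {a b : ℕ} (hab : a + b ≠ 0) :
    IsMonicOfDegree (1 + X ^ a * (X + 1) ^ b : (ZMod 2)[X]) (a + b) :=
  (isMonicOfDegree_X_pow_mul_X_add_one_pow a b).add_left (by rw [natDegree_one]; omega)

theorem natDegree_one_add_X_pow_mul_X_add_one_pow (a b : ℕ) :
    (1 + X ^ a * (X + 1) ^ b : (ZMod 2)[X]).natDegree = a + b := by
  rcases eq_or_ne (a + b) 0 with hab | hab
  · obtain ⟨rfl, rfl⟩ : a = 0 ∧ b = 0 := by omega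
    simp [CharTwo.add_self_eq_zero]
  · exact (isMonicOfDegree_one_add_X_pow_mul_X_add_one_pow hab).natDegree_eq

theorem odd_or_odd_of_irreducible {a b : ℕ}
    (hM : Irreducible (1 + X ^ a * (X + 1) ^ b : (ZMod 2)[X])) : Odd a ∨ Odd b := by
  by_contra! hab
  obtain ⟨⟨a', rfl⟩, ⟨b', rfl⟩⟩ : Even a ∧ Even b := by
    simpa only [Nat.not_odd_iff_even] using hab
  refine hM.not_isSquare ⟨1 + X ^ a' * (X + 1) ^ b', ?_⟩
  linear_combination -X ^ a' * (X + 1) ^ b' * CharTwo.two_eq_zero (R := (ZMod 2)[X])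

theorem sigmaPow_succ (P : (ZMod 2)[X]) (n : ℕ) :
    sigmaPow P (n + 1) = sigmaPow P n + P ^ (n + 1) :=
  Finset.sum_range_succ _ _

theorem sigmaPow_succ' (P : (ZMod 2)[X]) (n : ℕ) : sigmaPow P (n + 1) = 1 + P * sigmaPow P n := by
  rw [sigmaPow, sigmaPow, Finset.sum_range_succ', Finset.mul_sum]
  simp [pow_succ', add_comm]

theorem sigmaPow_two_mul_add_one (P : (ZMod 2)[X]) (n : ℕ) :
    sigmaPow P (2 * n + 1) = (1 + P) * sigmaPow P n ^ 2 := by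
  induction n with
  | zero => simp [sigmaPow, Finset.sum_range_succ]
  | succ n ih =>
    rw [show 2 * (n + 1) + 1 = 2 * n + 1 + 1 + 1 by ring, sigmaPow_succ, sigmaPow_succ, ih,
      sigmaPow_succ]
    linear_combination (-(1 + P) * sigmaPow P n * P ^ (n + 1)) *
      CharTwo.two_eq_zero (R := (ZMod 2)[X])

theorem sigmaPow_one_add_two_mul_succ (y : (ZMod 2)[X]) (n : ℕ) :
    sigmaPow (1 + y) (2 * (n + 1)) =
      1 + y * sigmaPow (1 + y) n ^ 2 + (y * sigmaPow (1 + y) n) ^ 2 := by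
  rw [show 2 * (n + 1) = 2 * n + 1 + 1 by ring, sigmaPow_succ', sigmaPow_two_mul_add_one]
  linear_combination (1 + y) * sigmaPow (1 + y) n ^ 2 *
    CharTwo.two_eq_zero (R := (ZMod 2)[X])

theorem natDegree_sigmaPow_le (P : (ZMod 2)[X]) (n : ℕ) :
    (sigmaPow P n).natDegree ≤ n * P.natDegree :=
  natDegree_sum_le_of_forall_le _ _ fun _ hi =>
    natDegree_pow_le.trans (Nat.mul_le_mul_right _ (Nat.lt_succ_iff.mp (Finset.mem_range.mp hi)))

theorem isMonicOfDegree_sigmaPow {P : (ZMod 2)[X]} {d : ℕ} (hP : IsMonicOfDegree P d) (hd : 0 < d)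
    (n : ℕ) : IsMonicOfDegree (sigmaPow P n) (n * d) := by
  cases n with
  | zero => simp [sigmaPow]
  | succ n =>
    rw [sigmaPow_succ, mul_comm]
    refine (hP.pow (n + 1)).add_left ?_
    calc (sigmaPow P n).natDegree ≤ n * d := hP.natDegree_eq ▸ natDegree_sigmaPow_le P n
      _ < d * (n + 1) := by nlinarith

theorem exists_odd_coeff_eq_one_of_odd_or_odd {a b : ℕ} (hab : Odd a ∨ Odd b) {Q : (ZMod 2)[X]}
    (hQ : Q.Monic) : ∃ i, Odd i ∧ (X ^ a * (X + 1) ^ b * Q ^ 2).natDegree ≤ i + 1 ∧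
      (X ^ a * (X + 1) ^ b * Q ^ 2).coeff i = 1 := by
  have hy := isMonicOfDegree_X_pow_mul_X_add_one_pow (R := ZMod 2) a b
  have hF : IsMonicOfDegree (X ^ a * (X + 1) ^ b * Q ^ 2) (a + b + 2 * Q.natDegree) := by
    simpa [mul_comm] using hy.mul ((⟨rfl, hQ⟩ : IsMonicOfDegree Q _).pow 2)
  have hnext : (X ^ a * (X + 1) ^ b * Q ^ 2).nextCoeff = (b : ZMod 2) := by
    rw [hy.monic.nextCoeff_mul (hQ.pow 2), hQ.nextCoeff_pow, nextCoeff_X_pow_mul_X_add_one_pow,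
      two_nsmul, CharTwo.add_self_eq_zero, add_zero]
  rw [hF.natDegree_eq]
  rcases Nat.even_or_odd (a + b) with hev | hodd
  · -- then `a` and `b` are both odd, and the coefficient just below the leading one is `b = 1`
    have hb : Odd b := by
      rcases hab with h | h <;> simp only [Nat.odd_iff, Nat.even_iff] at * <;> omega
    have hdeg : 0 < (X ^ a * (X + 1) ^ b * Q ^ 2).natDegree := by
      rw [hF.natDegree_eq]; have := hb.pos; omega
    refine ⟨a + b + 2 * Q.natDegree - 1, ?_, by omega, ?_⟩
    · simp only [Nat.odd_iff, Nat.even_iff] at *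
      omega
    · rw [← hF.natDegree_eq, ← nextCoeff_of_natDegree_pos hdeg, hnext, hb.natCast_zmod_two]
  · exact ⟨_, hodd.add_even (even_two_mul _), by omega, hF.natDegree_eq ▸ hF.monic.coeff_natDegree⟩

theorem codegree_cases_of_odd_coeffs {W : (ZMod 2)[X]} {D n c m : ℕ} (hD : Even D)
    (hWD : W.natDegree ≤ D) (hc : c = D - W.natDegree)
    (hgap : ∀ i, Odd i → D < i + n → W.coeff i = 0)
    (hpivot : ∃ i, Odd i ∧ D ≤ i + n + 1 ∧ W.coeff i = 1)
    (hm : Even c → Odd m ∧ 0 < m ∧ alpha m W = 1 ∧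
      ∀ k, Odd k → 0 < k → alpha k W = 1 → m ≤ k) :
    c = n ∨ (c = n + 1 ∧ Odd c) ∨ (Even c ∧ c + m = n) ∨ (Even c ∧ 3 ≤ m ∧ c + m = n + 1) := by
  obtain ⟨i, hi, hiD, hWi⟩ := hpivot
  have hW0 : W ≠ 0 := by rintro rfl; simp at hWi
  have hid : i ≤ W.natDegree := le_natDegree_of_ne_zero (by simp [hWi])
  have hle : ∀ j, Odd j → W.coeff j ≠ 0 → j + n ≤ D := fun j hj hWj => by
    by_contra! h
    exact hWj (hgap j hj h)
  rw [Nat.even_iff] at hD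
  rw [Nat.odd_iff] at hi
  rcases Nat.even_or_odd c with hce | hco
  · obtain ⟨hmo, hm0, hmW, hmin⟩ := hm hce
    simp only [hce, Nat.not_odd_iff_even.mpr hce, true_and, and_false, false_or]
    rw [Nat.even_iff] at hce
    rw [Nat.odd_iff] at hmo
    have hmi : m ≤ W.natDegree - i :=
      hmin _ (Nat.odd_iff.mpr (by omega)) (by omega) (by rw [alpha, Nat.sub_sub_self hid, hWi])
    have := hle (W.natDegree - m) (Nat.odd_iff.mpr (by omega)) (by rw [alpha] at hmW; simp [hmW])
    omega
  · simp only [hco, Nat.not_even_iff_odd.mpr hco, and_true, false_and, or_false]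
    rw [Nat.odd_iff] at hco
    have := hle W.natDegree (Nat.odd_iff.mpr (by omega)) (leadingCoeff_ne_zero.mpr hW0)
    omega

theorem stmt_0_general
    (h a b : ℕ) (hh : 2 ≤ h)
    (hab5 : 5 ≤ a + b)
    (M : Polynomial (ZMod 2)) (hM : M = 1 + X ^ a * (X + 1) ^ b)
    (hMirr : Irreducible M)
    (J : Finset ℕ) (aj bj : ℕ → ℕ)
    (hfact : sigmaPow M (2 * h) = ∏ j ∈ J, (1 + X ^ aj j * (X + 1) ^ bj j))
    (u v : ℕ) (hu : u = ∑ j ∈ J, aj j) (hv : v = ∑ j ∈ J, bj j)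
    (hueven : Even u) (hveven : Even v)
    (U W : Polynomial (ZMod 2)) (c : ℕ)
    (hU : U = X ^ u * (X + 1) ^ v)
    (hW : W = U + sigmaPow M (2 * h) + 1)
    (hc : c = 2 * h * (a + b) - W.natDegree)
    (m : ℕ)
    (hm : Even c → Odd m ∧ 0 < m ∧ alpha m W = 1 ∧
      ∀ k, Odd k → 0 < k → alpha k W = 1 → m ≤ k) :
    c = a + b ∨
    (c = a + b + 1 ∧ Odd c) ∨
    (Even c ∧ c + m = a + b) ∨
    (Even c ∧ 3 ≤ m ∧ c + m = a + b + 1) := by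
  obtain ⟨k, rfl⟩ : ∃ k, h = k + 1 := ⟨h - 1, by omega⟩
  subst hM
  set y : (ZMod 2)[X] := X ^ a * (X + 1) ^ b
  set Q := sigmaPow (1 + y) k
  have hM := isMonicOfDegree_one_add_X_pow_mul_X_add_one_pow (by omega : a + b ≠ 0)
  have hσ := isMonicOfDegree_sigmaPow hM (by omega) (2 * (k + 1))
  have hQ := isMonicOfDegree_sigmaPow hM (by omega) k
  have hF : IsMonicOfDegree (y * Q ^ 2) (a + b + 2 * (k * (a + b))) := by
    simpa [two_mul, mul_comm] using (isMonicOfDegree_X_pow_mul_X_add_one_pow a b).mul (hQ.pow 2)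
  have huv : u + v = 2 * (k + 1) * (a + b) := by
    have hfactors := Finset.prod_ne_zero_iff.mp (hfact ▸ hσ.ne_zero)
    rw [hu, hv, ← Finset.sum_add_distrib, ← hσ.natDegree_eq, hfact, natDegree_prod _ _ hfactors]
    simp only [natDegree_one_add_X_pow_mul_X_add_one_pow]
  obtain ⟨u', rfl⟩ := hueven
  obtain ⟨v', rfl⟩ := hveven
  have hWsq : W = (X ^ u' * (X + 1) ^ v' + y * Q) ^ 2 + y * Q ^ 2 := by
    rw [hW, hU, sigmaPow_one_add_two_mul_succ]
    linear_combination (1 - X ^ u' * (X + 1) ^ v' * y * Q) *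
      CharTwo.two_eq_zero (R := (ZMod 2)[X])
  have hodd : ∀ i, Odd i → W.coeff i = (y * Q ^ 2).coeff i := fun i hi => by
    rw [hWsq, coeff_add, coeff_sq_eq_zero_of_odd _ hi, zero_add]
  have hWD : W.natDegree ≤ 2 * (k + 1) * (a + b) := by
    rw [hW, hU]
    refine natDegree_add_le_of_degree_le (natDegree_add_le_of_degree_le ?_ hσ.natDegree_eq.le) ?_
    · rw [(isMonicOfDegree_X_pow_mul_X_add_one_pow _ _).natDegree_eq, huv]
    · simp
  have hD : 2 * (k + 1) * (a + b) = a + b + 2 * (k * (a + b)) + (a + b) := by ring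
  refine codegree_cases_of_odd_coeffs ⟨(k + 1) * (a + b), by ring⟩ hWD hc ?_ ?_ hm
  · intro i hi hiD
    rw [hodd i hi]
    exact coeff_eq_zero_of_natDegree_lt (by rw [hF.natDegree_eq]; omega)
  · obtain ⟨i, hi, hiF, hFi⟩ :=
      exists_odd_coeff_eq_one_of_odd_or_odd (odd_or_odd_of_irreducible hMirr) hQ.monic
    exact ⟨i, hi, by rw [hF.natDegree_eq] at hiF; omega, hodd i hi ▸ hFi⟩

theorem stmt_0
    (h a b : ℕ) (hh : 2 ≤ h) (hp : Nat.Prime (2 * h + 1))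
    (ha : 1 ≤ a) (hb : 1 ≤ b) (hab5 : 5 ≤ a + b)
    (M : Polynomial (ZMod 2)) (hM : M = 1 + X ^ a * (X + 1) ^ b)
    (hMirr : Irreducible M)
    (J : Finset ℕ) (aj bj : ℕ → ℕ)
    (haj : ∀ j ∈ J, 1 ≤ aj j) (hbj : ∀ j ∈ J, 1 ≤ bj j)
    (hMjirr : ∀ j ∈ J, Irreducible (1 + X ^ aj j * (X + 1) ^ bj j : Polynomial (ZMod 2)))
    (hdistinct : ∀ i ∈ J, ∀ j ∈ J, i ≠ j →
      (1 + X ^ aj i * (X + 1) ^ bj i : Polynomial (ZMod 2)) ≠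
        1 + X ^ aj j * (X + 1) ^ bj j)
    (hfact : sigmaPow M (2 * h) = ∏ j ∈ J, (1 + X ^ aj j * (X + 1) ^ bj j))
    (u v : ℕ) (hu : u = ∑ j ∈ J, aj j) (hv : v = ∑ j ∈ J, bj j)
    (hueven : Even u) (hveven : Even v)
    (U W R : Polynomial (ZMod 2)) (c : ℕ)
    (hU : U = X ^ u * (X + 1) ^ v)
    (hW : W = U + sigmaPow M (2 * h) + 1)
    (hc : c = 2 * h * (a + b) - W.natDegree)
    (hR : R = sigmaPow M (2 * h - 1) + W)
    (hW0 : W ≠ 0) (m : ℕ)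
    (hm : Even c → Odd m ∧ 0 < m ∧ alpha m W = 1 ∧
      ∀ k, Odd k → 0 < k → alpha k W = 1 → m ≤ k) :
    c = a + b ∨
    (c = a + b + 1 ∧ Odd c) ∨
    (Even c ∧ c + m = a + b) ∨
    (Even c ∧ 3 ≤ m ∧ c + m = a + b + 1) :=
  stmt_0_general h a b hh hab5 M hM hMirr J aj bj hfact u v hu hv hueven hveven U W c hU hW hc m hm
end

section
/- Let M = 1 + x^a(x+1)^b be a Mersenne prime and let h >= 1 be an integer. (i) If a+b is odd, then alpha_{a+b}(M^(2h) + M^(2h-1)) = 1. (ii) If a+b is even, then alpha_{a+b+1}(M^(2h) + M^(2h-1)) = 1. (iii) If a+b is even, then alpha_1(sigma(M^(2h-1))) = 1. -/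
open Polynomial

/-!
`M` is monic of degree `d = a + b` with `nextCoeff M = b`, so an odd power `M ^ m` has the
coefficients `1` and `m * b = b` in degrees `m * d` and `m * d - 1`. The even power `M ^ (m + 1)`
is a square in characteristic `2`, hence has no odd-degree terms, and so contributes nothing at
the odd index `m * d` of (i), resp. `m * d - 1` of (ii). When `d` is even, `b` is odd: otherwise
`a` is even too and `M` is a square. In `sigmaPow M m` the powers below `M ^ m` have degree at
most `(m - 1) * d < m * d - 1`.
-/

namespace Polynomial

variable {R : Type*}

theorem coeff_pow_expChar_eq_zero [CommSemiring R] {p : ℕ} [ExpChar R p] (f : R[X]) {n : ℕ}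
    (hn : ¬ p ∣ n) : (f ^ p).coeff n = 0 := by
  rw [← map_frobenius_expand, coeff_map, coeff_expand (expChar_pos R p), if_neg hn, map_zero]

theorem coeff_pow_of_even_of_odd [CommSemiring R] [ExpChar R 2] (f : R[X]) {n k : ℕ}
    (hn : Even n) (hk : Odd k) : (f ^ n).coeff k = 0 := by
  obtain ⟨j, rfl⟩ := hn
  rw [← two_mul, pow_mul']
  exact coeff_pow_expChar_eq_zero _ (Nat.two_dvd_ne_zero.mpr (Nat.odd_iff.mp hk))

theorem nextCoeff_add_of_natDegree_add_one_lt [Semiring R] {p q : R[X]}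
    (h : q.natDegree + 1 < p.natDegree) : (p + q).nextCoeff = p.nextCoeff := by
  have hdeg : (p + q).natDegree = p.natDegree := natDegree_add_eq_left_of_natDegree_lt (by omega)
  rw [nextCoeff_of_natDegree_pos (by omega), nextCoeff_of_natDegree_pos (by omega), hdeg,
    coeff_add, coeff_eq_zero_of_natDegree_lt (p := q) (by omega), add_zero]

theorem Monic.natDegree_pow_lt_pow_succ [Semiring R] {M : R[X]} (hM : M.Monic)
    (hd : 0 < M.natDegree) (m : ℕ) : (M ^ m).natDegree < (M ^ (m + 1)).natDegree := by
  rw [hM.natDegree_pow, hM.natDegree_pow]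
  exact Nat.mul_lt_mul_of_pos_right (Nat.lt_succ_self m) hd

section Mersenne

variable [CommSemiring R]

theorem monic_X_add_one : (X + 1 : R[X]).Monic := by simpa using monic_X_add_C (1 : R)

theorem monic_X_pow_mul_X_add_one_pow (a b : ℕ) : (X ^ a * (X + 1) ^ b : R[X]).Monic :=
  (monic_X_pow a).mul (monic_X_add_one.pow b)

theorem nextCoeff_X_pow_mul_X_add_one_pow (a b : ℕ) :
    (X ^ a * (X + 1) ^ b : R[X]).nextCoeff = b := by
  have hX0 : (X : R[X]).nextCoeff = 0 := by simpa using nextCoeff_X_add_C (0 : R)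
  have hX1 : (X + 1 : R[X]).nextCoeff = 1 := by simpa using nextCoeff_X_add_C (1 : R)
  rw [(monic_X_pow a).nextCoeff_mul (monic_X_add_one.pow b), monic_X.nextCoeff_pow,
    monic_X_add_one.nextCoeff_pow, hX0, hX1, smul_zero, zero_add, nsmul_one]

variable [Nontrivial R]

theorem natDegree_X_pow_mul_X_add_one_pow (a b : ℕ) :
    (X ^ a * (X + 1) ^ b : R[X]).natDegree = a + b := by
  have hX1 : (X + 1 : R[X]).natDegree = 1 := by simpa using natDegree_X_add_C (1 : R)
  rw [(monic_X_pow a).natDegree_mul (monic_X_add_one.pow b), natDegree_X_pow,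
    monic_X_add_one.natDegree_pow, hX1, mul_one]

variable {a b : ℕ}

theorem natDegree_one_add_X_pow_mul_X_add_one_pow (hab : 0 < a + b) :
    (1 + X ^ a * (X + 1) ^ b : R[X]).natDegree = a + b := by
  rw [natDegree_add_eq_right_of_natDegree_lt, natDegree_X_pow_mul_X_add_one_pow]
  rwa [natDegree_one, natDegree_X_pow_mul_X_add_one_pow]

theorem monic_one_add_X_pow_mul_X_add_one_pow (hab : 0 < a + b) :
    (1 + X ^ a * (X + 1) ^ b : R[X]).Monic := by
  refine (monic_X_pow_mul_X_add_one_pow a b).add_of_right ?_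
  rw [degree_one, degree_eq_natDegree (monic_X_pow_mul_X_add_one_pow a b).ne_zero,
    natDegree_X_pow_mul_X_add_one_pow]
  exact_mod_cast hab

theorem nextCoeff_one_add_X_pow_mul_X_add_one_pow (hab : 2 ≤ a + b) :
    (1 + X ^ a * (X + 1) ^ b : R[X]).nextCoeff = b := by
  rw [add_comm, nextCoeff_add_of_natDegree_add_one_lt, nextCoeff_X_pow_mul_X_add_one_pow]
  rw [natDegree_one, natDegree_X_pow_mul_X_add_one_pow]
  omega

end Mersenne

theorem odd_of_irreducible_one_add_X_pow_mul_X_add_one_pow {a b : ℕ}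
    (hirr : Irreducible (1 + X ^ a * (X + 1) ^ b : (ZMod 2)[X])) (hab : Even (a + b)) :
    Odd b := by
  by_contra hb
  obtain ⟨b', rfl⟩ := Nat.not_odd_iff_even.mp hb
  obtain ⟨a', rfl⟩ := (Nat.even_add.mp hab).mpr ⟨b', rfl⟩
  have hsq : (1 + X ^ (a' + a') * (X + 1) ^ (b' + b') : (ZMod 2)[X]) =
      (1 + X ^ a' * (X + 1) ^ b') ^ 2 := by
    rw [add_pow_char (p := 2), one_pow, mul_pow, ← pow_mul, ← pow_mul, mul_two, mul_two]
  exact not_irreducible_pow (by norm_num : 2 ≠ 1) (hsq ▸ hirr)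

end Polynomial

theorem alpha_add_of_natDegree_lt {p q : (ZMod 2)[X]} (h : q.natDegree < p.natDegree) (l : ℕ) :
    alpha l (p + q) = alpha l p + q.coeff (p.natDegree - l) := by
  rw [alpha, alpha, natDegree_add_eq_left_of_natDegree_lt h, coeff_add]

section Monic

variable {M : (ZMod 2)[X]}

theorem Polynomial.Monic.nextCoeff_pow_of_odd (hM : M.Monic) (hnext : M.nextCoeff = 1) {m : ℕ}
    (hm : Odd m) : (M ^ m).nextCoeff = 1 := by
  rw [hM.nextCoeff_pow, hnext, nsmul_one, ZMod.natCast_eq_one_iff_odd.mpr hm]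

theorem alpha_natDegree_pow_succ_add_pow (hM : M.Monic) (hd : Odd M.natDegree) {m : ℕ}
    (hm : Odd m) : alpha M.natDegree (M ^ (m + 1) + M ^ m) = 1 := by
  rw [alpha_add_of_natDegree_lt (hM.natDegree_pow_lt_pow_succ hd.pos m), alpha,
    hM.natDegree_pow, add_one_mul, Nat.add_sub_cancel,
    coeff_pow_of_even_of_odd _ hm.add_one (hm.mul hd), zero_add, ← hM.natDegree_pow,
    (hM.pow m).coeff_natDegree]

theorem alpha_natDegree_add_one_pow_succ_add_pow (hM : M.Monic) (hd : Even M.natDegree)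
    (hnext : M.nextCoeff = 1) {m : ℕ} (hm : Odd m) :
    alpha (M.natDegree + 1) (M ^ (m + 1) + M ^ m) = 1 := by
  have hd0 : 0 < M.natDegree := natDegree_pos_of_nextCoeff_ne_zero (by simp [hnext])
  have hmd : 0 < (M ^ m).natDegree := by rw [hM.natDegree_pow]; exact Nat.mul_pos hm.pos hd0
  have hodd : Odd ((M ^ m).natDegree - 1) := by
    rw [hM.natDegree_pow]
    exact Nat.Even.sub_odd (by rwa [← hM.natDegree_pow]) (hd.mul_left m) odd_one
  have hidx : (M ^ (m + 1)).natDegree - (M.natDegree + 1) = (M ^ m).natDegree - 1 := by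
    rw [hM.natDegree_pow, hM.natDegree_pow, add_one_mul]
    omega
  rw [alpha_add_of_natDegree_lt (hM.natDegree_pow_lt_pow_succ hd0 m), alpha, hidx,
    coeff_pow_of_even_of_odd _ hm.add_one hodd, zero_add, ← nextCoeff_of_natDegree_pos hmd,
    hM.nextCoeff_pow_of_odd hnext hm]

theorem alpha_one_sigmaPow (hM : M.Monic) (hd : 2 ≤ M.natDegree) (hnext : M.nextCoeff = 1)
    {n : ℕ} (hn : Odd n) : alpha 1 (sigmaPow M n) = 1 := by
  obtain ⟨k, rfl⟩ : ∃ k, n = k + 1 := ⟨n - 1, by have := hn.pos; omega⟩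
  have hsplit : sigmaPow M (k + 1) = M ^ (k + 1) + sigmaPow M k := by
    rw [sigmaPow, sigmaPow, Finset.sum_range_succ, add_comm]
  have hle := natDegree_sigmaPow_le M k
  have hdeg : (M ^ (k + 1)).natDegree = k * M.natDegree + M.natDegree := by
    rw [hM.natDegree_pow, add_one_mul]
  rw [hsplit, alpha_add_of_natDegree_lt (by omega), coeff_eq_zero_of_natDegree_lt (by omega),
    add_zero, alpha, ← nextCoeff_of_natDegree_pos (by omega), hM.nextCoeff_pow_of_odd hnext hn]

end Monic

theorem stmt_13_general
    (a b h : ℕ) (hh : 1 ≤ h)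
    (M : Polynomial (ZMod 2)) (hM : M = 1 + X ^ a * (X + 1) ^ b)
    (hMirr : Irreducible M) :
    (Odd (a + b) → alpha (a + b) (M ^ (2 * h) + M ^ (2 * h - 1)) = 1) ∧
    (Even (a + b) → alpha (a + b + 1) (M ^ (2 * h) + M ^ (2 * h - 1)) = 1) ∧
    (Even (a + b) → alpha 1 (sigmaPow M (2 * h - 1)) = 1) := by
  have hab : 0 < a + b := by
    refine Nat.pos_of_ne_zero fun h0 => hMirr.ne_zero ?_
    obtain ⟨rfl, rfl⟩ : a = 0 ∧ b = 0 := by omega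
    rw [hM, pow_zero, pow_zero, mul_one, one_add_one_eq_two]
    exact CharTwo.two_eq_zero
  have hMon : M.Monic := hM ▸ monic_one_add_X_pow_mul_X_add_one_pow hab
  have hdeg : M.natDegree = a + b := hM ▸ natDegree_one_add_X_pow_mul_X_add_one_pow hab
  have hnext (heven : Even M.natDegree) : M.nextCoeff = 1 := by
    rw [hdeg] at heven
    rw [hM, nextCoeff_one_add_X_pow_mul_X_add_one_pow (by obtain ⟨c, hc⟩ := heven; omega),
      ZMod.natCast_eq_one_iff_odd]
    exact odd_of_irreducible_one_add_X_pow_mul_X_add_one_pow (hM ▸ hMirr) heven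
  obtain ⟨k, rfl⟩ : ∃ k, h = k + 1 := ⟨h - 1, by omega⟩
  rw [← hdeg, show 2 * (k + 1) - 1 = 2 * k + 1 by omega, show 2 * (k + 1) = 2 * k + 1 + 1 by ring]
  have hm : Odd (2 * k + 1) := odd_two_mul_add_one k
  exact ⟨fun hodd => alpha_natDegree_pow_succ_add_pow hMon hodd hm,
    fun heven => alpha_natDegree_add_one_pow_succ_add_pow hMon heven (hnext heven) hm,
    fun heven => alpha_one_sigmaPow hMon (by obtain ⟨c, hc⟩ := heven; omega) (hnext heven) hm⟩

theorem stmt_13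
    (a b h : ℕ) (ha : 1 ≤ a) (hb : 1 ≤ b) (hh : 1 ≤ h)
    (M : Polynomial (ZMod 2)) (hM : M = 1 + X ^ a * (X + 1) ^ b)
    (hMirr : Irreducible M) :
    (Odd (a + b) → alpha (a + b) (M ^ (2 * h) + M ^ (2 * h - 1)) = 1) ∧
    (Even (a + b) → alpha (a + b + 1) (M ^ (2 * h) + M ^ (2 * h - 1)) = 1) ∧
    (Even (a + b) → alpha 1 (sigmaPow M (2 * h - 1)) = 1) :=
  stmt_13_general a b h hh M hM hMirr
end

section
/- Assume W != 0, c is even, and let m be the least odd positive integer with alpha_m(W) = 1 (assumed to exist). If c + m < a+b, then alpha_{c+m}(U) = 1. -/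
open Polynomial

/-!
Read `W = U + σ(M^{2h}) + 1` at the exponent `N = 2h(a+b) - (c+m)`, which is `deg W - m`, so that
`W` has coefficient `1` there. Since `c` is even and `m` odd, `N` is odd and positive, so `1`
contributes nothing. Splitting `σ(M^{2h}) = σ(M^{2h-1}) + (M^h)^2`, the first summand has degree
`(2h-1)(a+b) < N` and a square over `F_2` has no odd coefficients. Hence `U` has coefficient `1`
at `N`, and `N = deg U - (c+m)` because `deg U = deg σ(M^{2h}) = 2h(a+b)` by the factorization.
-/

theorem Polynomial.coeff_pow_expChar_eq_zero_s16 {R : Type*} [CommSemiring R] {p : ℕ} [ExpChar R p]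
    (f : R[X]) {n : ℕ} (hn : ¬p ∣ n) : (f ^ p).coeff n = 0 := by
  rw [← map_frobenius_expand, coeff_map, coeff_expand (expChar_pos R p), if_neg hn, map_zero]

theorem natDegree_X_pow_mul_X_add_one_pow (a b : ℕ) :
    (X ^ a * (X + 1) ^ b : (ZMod 2)[X]).natDegree = a + b := by
  have hX1 : (X + 1 : (ZMod 2)[X]).natDegree = 1 := by simpa using natDegree_X_add_C (1 : ZMod 2)
  have hX1ne : (X + 1 : (ZMod 2)[X]) ≠ 0 := ne_zero_of_natDegree_gt (hX1 ▸ one_pos)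
  rw [natDegree_mul (pow_ne_zero _ X_ne_zero) (pow_ne_zero _ hX1ne),
    natDegree_X_pow, natDegree_pow, hX1, mul_one]

theorem natDegree_prod_one_add_X_pow_mul_X_add_one_pow {ι : Type*} (s : Finset ι) (a b : ι → ℕ)
    (h0 : ∏ i ∈ s, (1 + X ^ a i * (X + 1) ^ b i : (ZMod 2)[X]) ≠ 0) :
    (∏ i ∈ s, (1 + X ^ a i * (X + 1) ^ b i : (ZMod 2)[X])).natDegree = ∑ i ∈ s, (a i + b i) := by
  rw [natDegree_prod _ _ (Finset.prod_ne_zero_iff.mp h0)]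
  simp only [natDegree_one_add_X_pow_mul_X_add_one_pow]

theorem natDegree_sigmaPow (P : (ZMod 2)[X]) (n : ℕ) :
    (sigmaPow P n).natDegree = n * P.natDegree := by
  rcases Nat.eq_zero_or_pos P.natDegree with hP | hP
  · simpa [hP] using natDegree_sigmaPow_le P n
  cases n with
  | zero => simp [sigmaPow]
  | succ k =>
    have hlow : (sigmaPow P k).natDegree < (P ^ (k + 1)).natDegree := by
      rw [natDegree_pow]
      exact (natDegree_sigmaPow_le P k).trans_lt (Nat.mul_lt_mul_of_pos_right k.lt_succ_self hP)
    rw [sigmaPow_succ, natDegree_add_eq_right_of_natDegree_lt hlow, natDegree_pow]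

theorem coeff_sigmaPow_eq_zero (P : (ZMod 2)[X]) {n N : ℕ} (hn : Even n) (hN : Odd N)
    (hlt : (n - 1) * P.natDegree < N) : (sigmaPow P n).coeff N = 0 := by
  cases n with
  | zero => simp [sigmaPow, coeff_one, hN.pos.ne']
  | succ k =>
    obtain ⟨j, hj⟩ := hn
    have hsq : P ^ (k + 1) = (P ^ j) ^ 2 := by rw [← pow_mul, hj, mul_two]
    rw [sigmaPow_succ, coeff_add, hsq, coeff_pow_expChar_eq_zero_s16 _ hN.not_two_dvd_nat,
      coeff_eq_zero_of_natDegree_lt ((natDegree_sigmaPow_le P k).trans_lt (by simpa using hlt)), add_zero]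

theorem stmt_16_general
    (h a b : ℕ) (hh : 2 ≤ h)
    (M : Polynomial (ZMod 2)) (hM : M = 1 + X ^ a * (X + 1) ^ b)
    (J : Finset ℕ) (aj bj : ℕ → ℕ)
    (hfact : sigmaPow M (2 * h) = ∏ j ∈ J, (1 + X ^ aj j * (X + 1) ^ bj j))
    (u v : ℕ) (hu : u = ∑ j ∈ J, aj j) (hv : v = ∑ j ∈ J, bj j)
    (U W : Polynomial (ZMod 2)) (c : ℕ)
    (hU : U = X ^ u * (X + 1) ^ v)
    (hW : W = U + sigmaPow M (2 * h) + 1)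
    (hc : c = 2 * h * (a + b) - W.natDegree)
    (hceven : Even c)
    (m : ℕ) (hmodd : Odd m) (hmW : alpha m W = 1)
    (hcm : c + m < a + b) :
    alpha (c + m) U = 1 := by
  have hMdeg : M.natDegree = a + b := hM ▸ natDegree_one_add_X_pow_mul_X_add_one_pow a b
  have hsplit : 2 * h * (a + b) = (2 * h - 1) * (a + b) + (a + b) := by
    rw [← Nat.succ_mul]; congr 1; omega
  have hσdeg : (sigmaPow M (2 * h)).natDegree = 2 * h * (a + b) := by
    rw [natDegree_sigmaPow, hMdeg]
  have hUdeg : U.natDegree = 2 * h * (a + b) := by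
    have hσ0 : sigmaPow M (2 * h) ≠ 0 := ne_zero_of_natDegree_gt (n := 0) (by omega)
    rw [hU, natDegree_X_pow_mul_X_add_one_pow, hu, hv, ← Finset.sum_add_distrib,
      ← natDegree_prod_one_add_X_pow_mul_X_add_one_pow _ _ _ (hfact ▸ hσ0), ← hfact, hσdeg]
  have hWdeg : W.natDegree = 2 * h * (a + b) - c := by
    have : W.natDegree ≤ 2 * h * (a + b) := by
      rw [hW]
      exact natDegree_add_le_of_degree_le
        (natDegree_add_le_of_degree_le hUdeg.le hσdeg.le) (natDegree_one.trans_le (Nat.zero_le _))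
    omega
  obtain ⟨N, hN⟩ : ∃ N, N = 2 * h * (a + b) - (c + m) := ⟨_, rfl⟩
  have hNodd : Odd N :=
    hN ▸ Nat.Even.sub_odd (by omega) (even_two_mul h |>.mul_right _) (hceven.add_odd hmodd)
  have hWN : W.coeff N = 1 := by
    rwa [alpha, hWdeg, Nat.sub_sub, ← hN] at hmW
  have hσN : (sigmaPow M (2 * h)).coeff N = 0 :=
    coeff_sigmaPow_eq_zero M (even_two_mul h) hNodd (by rw [hMdeg]; omega)
  rw [alpha, hUdeg, ← hN]
  simpa [hW, hσN, coeff_one, hNodd.pos.ne'] using hWN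

theorem stmt_16
    (h a b : ℕ) (hh : 2 ≤ h) (hp : Nat.Prime (2 * h + 1))
    (ha : 1 ≤ a) (hb : 1 ≤ b) (hab5 : 5 ≤ a + b)
    (M : Polynomial (ZMod 2)) (hM : M = 1 + X ^ a * (X + 1) ^ b)
    (hMirr : Irreducible M)
    (J : Finset ℕ) (aj bj : ℕ → ℕ)
    (haj : ∀ j ∈ J, 1 ≤ aj j) (hbj : ∀ j ∈ J, 1 ≤ bj j)
    (hMjirr : ∀ j ∈ J, Irreducible (1 + X ^ aj j * (X + 1) ^ bj j : Polynomial (ZMod 2)))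
    (hdistinct : ∀ i ∈ J, ∀ j ∈ J, i ≠ j →
      (1 + X ^ aj i * (X + 1) ^ bj i : Polynomial (ZMod 2)) ≠
        1 + X ^ aj j * (X + 1) ^ bj j)
    (hfact : sigmaPow M (2 * h) = ∏ j ∈ J, (1 + X ^ aj j * (X + 1) ^ bj j))
    (u v : ℕ) (hu : u = ∑ j ∈ J, aj j) (hv : v = ∑ j ∈ J, bj j)
    (U W R : Polynomial (ZMod 2)) (c : ℕ)
    (hU : U = X ^ u * (X + 1) ^ v)
    (hW : W = U + sigmaPow M (2 * h) + 1)
    (hc : c = 2 * h * (a + b) - W.natDegree)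
    (hR : R = sigmaPow M (2 * h - 1) + W)
    (hW0 : W ≠ 0) (hceven : Even c)
    (m : ℕ) (hmodd : Odd m) (hmpos : 0 < m) (hmW : alpha m W = 1)
    (hmleast : ∀ k, Odd k → 0 < k → alpha k W = 1 → m ≤ k)
    (hcm : c + m < a + b) :
    alpha (c + m) U = 1 :=
  stmt_16_general h a b hh M hM J aj bj hfact u v hu hv U W c hU hW hc hceven m hmodd hmW hcm
end
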